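/- Let R be a reduced ring and a ∈ R. The principal ideal RaR is a right annihilator ideal (i.e., RaR = r(l(RaR))) if and only if RaR is a z°-ideal. -/

import Mathlib

open TwoSidedIdeal

/-- Left annihilator of a set: `l(S) = {x | ∀ s ∈ S, x*s = 0}`. -/
def lAnn (R : Type*) [Ring R] (S : Set R) : Set R := {x | ∀ s ∈ S, x * s = 0}

/-- Right annihilator of a set: `r(S) = {x | ∀ s ∈ S, s*x = 0}`. -/
def rAnn (R : Type*) [Ring R] (S : Set R) : Set R := {x | ∀ s ∈ S, s * x = 0}

/-- A ring is semiprime if `I² = 0` implies `I = 0` for every two-sided ideal `I`. -/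
def IsSemiprimeRing (R : Type*) [Ring R] : Prop :=
  ∀ I : TwoSidedIdeal R, (∀ a ∈ I, ∀ b ∈ I, a * b = 0) → I = ⊥

/-- A two-sided ideal `P` is prime if it is proper and `IJ ⊆ P` implies `I ⊆ P` or `J ⊆ P`. -/
def IsPrimeTSI {R : Type*} [Ring R] (P : TwoSidedIdeal R) : Prop :=
  P ≠ ⊤ ∧ ∀ I J : TwoSidedIdeal R, (∀ a ∈ I, ∀ b ∈ J, a * b ∈ P) → I ≤ P ∨ J ≤ P

/-- A minimal prime ideal: a prime two-sided ideal minimal among primes. -/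
def IsMinPrime {R : Type*} [Ring R] (P : TwoSidedIdeal R) : Prop :=
  IsPrimeTSI P ∧ ∀ Q : TwoSidedIdeal R, IsPrimeTSI Q → Q ≤ P → Q = P

/-- `Pmin R B` is the intersection of all minimal prime ideals of `R` containing the set `B`
(equal to all of `R` if there are none). -/
def Pmin (R : Type*) [Ring R] (B : Set R) : Set R :=
  ⋂ P ∈ {P : TwoSidedIdeal R | IsMinPrime P ∧ B ⊆ (P : Set R)}, (P : Set R)

/-- `Pa a` : the intersection of all minimal prime ideals containing `a`. -/
def Pa {R : Type*} [Ring R] (a : R) : Set R := Pmin R {a}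

/-- An ideal `I` is a z°-ideal if `P_a ⊆ I` for every `a ∈ I`. -/
def IsZoIdeal {R : Type*} [Ring R] (I : TwoSidedIdeal R) : Prop :=
  ∀ a ∈ I, Pa a ⊆ (I : Set R)

/-- An ideal `I` is a right d-ideal if `r(l(RaR)) ⊆ I` for every `a ∈ I`. -/
def IsRightDIdeal {R : Type*} [Ring R] (I : TwoSidedIdeal R) : Prop :=
  ∀ a ∈ I, rAnn R (lAnn R (span {a} : Set R)) ⊆ (I : Set R)

/-- An ideal `I` is a right annihilator ideal if `I = r(l(I))`. -/
def IsRightAnnIdeal {R : Type*} [Ring R] (I : TwoSidedIdeal R) : Prop :=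
  (I : Set R) = rAnn R (lAnn R (I : Set R))

/-!
In a reduced ring `P_a = r(l(RaR))` for every `a`; granted this, the equivalence is formal, since
`r(l(-))` is monotone and `RbR ⊆ RaR` for `b ∈ RaR`.

Reduced rings are symmetric (`xyz = 0` forces every permutation of the product to vanish), so
`l(RaR) = l(a)`. If `y a = 0` but `y x ≠ 0`, a minimal prime avoiding `y x` contains `a` but
not `x`; hence `P_a ⊆ r(l(RaR))`. Conversely every `a` in a minimal prime `P` is killed by some
`s ∉ P`: otherwise the elements `m` with `l(m) ⊆ l(s a)` for some `s ∉ P` form a multiplicative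
set avoiding `0`, and a prime maximal among the ideals disjoint from it lies in `P` and misses
`a`, contradicting minimality of `P`. Then `x ∈ r(l(RaR))` gives `s R x = 0 ⊆ P`, so `x ∈ P`.
-/

namespace IsReduced

variable {R : Type*} [Ring R] [IsReduced R] {x y z : R}

theorem eq_zero_of_mul_self (h : x * x = 0) : x = 0 :=
  IsReduced.eq_zero x ⟨2, by rw [pow_two, h]⟩

theorem mul_eq_zero_comm (h : x * y = 0) : y * x = 0 :=
  eq_zero_of_mul_self <| by rw [mul_assoc, ← mul_assoc x, h, zero_mul, mul_zero]

theorem mul_mul_eq_zero (h : x * y = 0) (r : R) : x * r * y = 0 :=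
  eq_zero_of_mul_self <| by
    rw [show x * r * y * (x * r * y) = x * r * (y * x) * r * y by noncomm_ring,
      mul_eq_zero_comm h]
    noncomm_ring

theorem mul_mul_eq_zero_swap (h : x * y * z = 0) : x * z * y = 0 := by
  have h₁ : x * z * y * z = 0 := by
    simpa only [mul_assoc] using mul_mul_eq_zero (by rwa [← mul_assoc]) z
  have h₂ : x * z * y * x * z = 0 := mul_mul_eq_zero (x := x * z * y) h₁ x
  exact eq_zero_of_mul_self <| by
    rw [show x * z * y * (x * z * y) = x * z * y * x * z * y by noncomm_ring, h₂, zero_mul]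

theorem mul_eq_zero_of_mul_mul_self (h : x * y * y = 0) : x * y = 0 :=
  eq_zero_of_mul_self <| by
    rw [mul_assoc, mul_eq_zero_comm (x := x * y) h, mul_zero]

end IsReduced

section Annihilators

variable {R : Type*} [Ring R]

theorem lAnn_anti {S T : Set R} (h : S ⊆ T) : lAnn R T ⊆ lAnn R S :=
  fun _ hx s hs => hx s (h hs)

theorem rAnn_anti {S T : Set R} (h : S ⊆ T) : rAnn R T ⊆ rAnn R S :=
  fun _ hx s hs => hx s (h hs)

theorem subset_rAnn_lAnn (S : Set R) : S ⊆ rAnn R (lAnn R S) :=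
  fun _ hx _ hy => hy _ hx

theorem mem_lAnn_span_singleton [IsReduced R] {a y : R} :
    y ∈ lAnn R (span {a} : Set R) ↔ y * a = 0 := by
  refine ⟨fun h => h a (subset_span rfl), fun h s hs => ?_⟩
  induction hs using span_induction with
  | mem x hx => rwa [hx]
  | zero => exact mul_zero y
  | add _ _ _ _ h₁ h₂ => rw [mul_add, h₁, h₂, add_zero]
  | neg _ _ h₁ => rw [mul_neg, h₁, neg_zero]
  | left_absorb r _ _ h₁ => rw [← mul_assoc, IsReduced.mul_mul_eq_zero h₁]
  | right_absorb r _ _ h₁ => rw [← mul_assoc, h₁, zero_mul]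

end Annihilators

section Primes

variable {R : Type*} [Ring R]

theorem mul_mem_of_forall_mul_mul_mem {P : TwoSidedIdeal R} {x y : R}
    (h : ∀ r, x * r * y ∈ P) {u v : R} (hu : u ∈ span {x}) (hv : v ∈ span {y}) :
    u * v ∈ P := by
  have hxv : ∀ r, x * r * v ∈ P := by
    induction hv using span_induction with
    | mem _ hv => rwa [hv]
    | zero => simp
    | add _ _ _ _ h₁ h₂ => simpa [mul_add] using fun r => P.add_mem (h₁ r) (h₂ r)
    | neg _ _ h₁ => simpa using h₁
    | left_absorb a _ _ h₁ => simpa [mul_assoc] using fun r => h₁ (r * a)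
    | right_absorb b _ _ h₁ => simpa [mul_assoc] using fun r => P.mul_mem_right _ b (h₁ r)
  suffices ∀ r, u * r * v ∈ P by simpa using this 1
  induction hu using span_induction with
  | mem _ hu => rwa [hu]
  | zero => simp
  | add _ _ _ _ h₁ h₂ => simpa [add_mul] using fun r => P.add_mem (h₁ r) (h₂ r)
  | neg _ _ h₁ => simpa using h₁
  | left_absorb a _ _ h₁ => simpa [mul_assoc] using fun r => P.mul_mem_left a _ (h₁ r)
  | right_absorb b _ _ h₁ => simpa [mul_assoc] using fun r => h₁ (b * r)

theorem IsPrimeTSI.one_notMem {P : TwoSidedIdeal R} (hP : IsPrimeTSI P) : (1 : R) ∉ P :=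
  fun h => hP.1 (P.eq_top h)

theorem IsPrimeTSI.mem_or_mem {P : TwoSidedIdeal R} (hP : IsPrimeTSI P) {x y : R}
    (h : ∀ r, x * r * y ∈ P) : x ∈ P ∨ y ∈ P :=
  (hP.2 _ _ fun _ hu _ hv => mul_mem_of_forall_mul_mul_mem h hu hv).imp
    (· (subset_span rfl)) (· (subset_span rfl))

theorem IsPrimeTSI.sInf_of_isChain {c : Set (TwoSidedIdeal R)} (hne : c.Nonempty)
    (hc : IsChain (· ≤ ·) c) (hprime : ∀ P ∈ c, IsPrimeTSI P) : IsPrimeTSI (sInf c) := by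
  obtain ⟨P₀, hP₀⟩ := hne
  refine ⟨fun htop => (hprime P₀ hP₀).1 (top_le_iff.mp (htop ▸ sInf_le hP₀)), fun I J hIJ => ?_⟩
  by_cases hI : I ≤ sInf c
  · exact .inl hI
  obtain ⟨P₁, hP₁, hIP₁⟩ : ∃ P ∈ c, ¬ I ≤ P := by simpa [le_sInf_iff] using hI
  have hJP₁ : J ≤ P₁ :=
    ((hprime P₁ hP₁).2 I J fun a ha b hb => sInf_le hP₁ (hIJ a ha b hb)).resolve_left hIP₁
  refine .inr (le_sInf fun P hP => ?_)
  rcases (hprime P hP).2 I J (fun a ha b hb => sInf_le hP (hIJ a ha b hb)) with hIP | hJP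
  · rcases hc.total hP hP₁ with hPP₁ | hP₁P
    · exact absurd (hIP.trans hPP₁) hIP₁
    · exact hJP₁.trans hP₁P
  · exact hJP

theorem exists_isMinPrime_le {P : TwoSidedIdeal R} (hP : IsPrimeTSI P) :
    ∃ Q, IsMinPrime Q ∧ Q ≤ P := by
  set S := {Q : (TwoSidedIdeal R)ᵒᵈ | IsPrimeTSI (OrderDual.ofDual Q) ∧ OrderDual.ofDual Q ≤ P}
  obtain ⟨Q, -, hQ⟩ : ∃ Q, OrderDual.toDual P ≤ Q ∧ Maximal (· ∈ S) Q := by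
    refine zorn_le_nonempty₀ S ?_ _ ⟨hP, le_rfl⟩
    rintro (c : Set (TwoSidedIdeal R)) hcS hc Q hQ
    exact ⟨OrderDual.toDual (sInf c),
      ⟨IsPrimeTSI.sInf_of_isChain ⟨Q, hQ⟩ hc.symm fun P hP => (hcS hP).1,
        (sInf_le (α := TwoSidedIdeal R) hQ).trans (hcS hQ).2⟩,
      fun _ hz => OrderDual.le_toDual.mpr (sInf_le hz)⟩
  exact ⟨_, ⟨hQ.prop.1, fun Q' hQ' hle => le_antisymm hle
    (hQ.le_of_ge (y := OrderDual.toDual Q') ⟨hQ', hle.trans hQ.prop.2⟩ hle)⟩, hQ.prop.2⟩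

theorem exists_mem_of_mem_sSup_of_isChain {c : Set (TwoSidedIdeal R)} (hne : c.Nonempty)
    (hc : IsChain (· ≤ ·) c) {x : R} (hx : x ∈ sSup c) : ∃ I ∈ c, x ∈ I := by
  obtain ⟨I₀, hI₀⟩ := hne
  let U : TwoSidedIdeal R := .mk' {x | ∃ I ∈ c, x ∈ I} ⟨I₀, hI₀, I₀.zero_mem⟩
    (fun ⟨I, hI, hxI⟩ ⟨J, hJ, hyJ⟩ => (hc.total hI hJ).elim
      (fun hIJ => ⟨J, hJ, J.add_mem (hIJ hxI) hyJ⟩) (fun hJI => ⟨I, hI, I.add_mem hxI (hJI hyJ)⟩))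
    (fun ⟨I, hI, hxI⟩ => ⟨I, hI, I.neg_mem hxI⟩)
    (fun ⟨I, hI, hyI⟩ => ⟨I, hI, I.mul_mem_left _ _ hyI⟩)
    (fun ⟨I, hI, hxI⟩ => ⟨I, hI, I.mul_mem_right _ _ hxI⟩)
  have hcU : sSup c ≤ U := sSup_le fun I hI y hy => (mem_mk' ..).mpr ⟨I, hI, hy⟩
  exact (mem_mk' _ _ _ _ _ _ x).mp (hcU hx)

theorem exists_isPrimeTSI_disjoint (M : Submonoid R) (hM : (0 : R) ∉ M) :
    ∃ Q : TwoSidedIdeal R, IsPrimeTSI Q ∧ Disjoint (Q : Set R) M := by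
  set S := {I : TwoSidedIdeal R | Disjoint (I : Set R) M}
  obtain ⟨Q, -, hQ⟩ : ∃ Q, ⊥ ≤ Q ∧ Maximal (· ∈ S) Q := by
    refine zorn_le_nonempty₀ S (fun c hcS hc I hI => ⟨sSup c, ?_, fun _ => le_sSup⟩) ⊥
      (by simpa [S, coe_bot] using hM)
    refine Set.disjoint_left.mpr fun x hx hxM => ?_
    obtain ⟨J, hJ, hxJ⟩ := exists_mem_of_mem_sSup_of_isChain ⟨I, hI⟩ hc hx
    exact Set.disjoint_left.mp (hcS hJ) hxJ hxM
  have meets_of_not_le {I : TwoSidedIdeal R} (hI : ¬ I ≤ Q) : ∃ m ∈ M, m ∈ Q ⊔ I := by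
    by_contra! h
    exact hI (le_sup_right.trans (hQ.le_of_ge (Set.disjoint_right.mpr h) le_sup_left))
  refine ⟨Q, ⟨fun hQ_top => ?_, fun I J hIJ => ?_⟩, hQ.prop⟩
  · exact Set.disjoint_left.mp hQ.prop (hQ_top ▸ mem_top R) M.one_mem
  by_contra! ⟨hI, hJ⟩
  obtain ⟨m, hm, hmQI⟩ := meets_of_not_le hI
  obtain ⟨n, hn, hnQJ⟩ := meets_of_not_le hJ
  obtain ⟨q, hq, i, hi, rfl⟩ := mem_sup.mp hmQI
  obtain ⟨q', hq', j, hj, rfl⟩ := mem_sup.mp hnQJ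
  refine Set.disjoint_left.mp hQ.prop ?_ (M.mul_mem hm hn)
  rw [show (q + i) * (q' + j) = q * (q' + j) + i * q' + i * j by noncomm_ring]
  exact Q.add_mem (Q.add_mem (Q.mul_mem_right _ _ hq) (Q.mul_mem_left _ _ hq')) (hIJ i hi j hj)

end Primes

section MinimalPrimes

variable {R : Type*} [Ring R] [IsReduced R]

/-- It contains `a` and the complement of `P`, and it contains `0` exactly when some `s ∉ P`
kills `a`. Closure under products is where symmetry of reduced rings is used. -/
def annSubmonoid {P : TwoSidedIdeal R} (hP : IsPrimeTSI P) (a : R) : Submonoid R where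
  carrier := {m | ∃ s ∉ P, ∀ c, c * m = 0 → c * (s * a) = 0}
  one_mem' := ⟨1, hP.one_notMem, fun c hc => by simp [(mul_one c).symm.trans hc]⟩
  mul_mem' := by
    rintro m₁ m₂ ⟨s₁, hs₁, h₁⟩ ⟨s₂, hs₂, h₂⟩
    obtain ⟨r, hr⟩ : ∃ r, s₂ * r * s₁ ∉ P := by
      by_contra! h
      exact (hP.mem_or_mem h).elim hs₂ hs₁
    refine ⟨s₂ * r * s₁, hr, fun c hc => ?_⟩
    have hc₁ : c * (s₂ * a) * m₁ = 0 :=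
      IsReduced.mul_mul_eq_zero_swap (h₂ (c * m₁) (by rwa [mul_assoc]))
    have hc₂ : c * s₂ * a * (s₁ * a) = 0 := by simpa only [mul_assoc] using h₁ _ hc₁
    have hc₃ : c * s₂ * s₁ * a = 0 :=
      IsReduced.mul_eq_zero_of_mul_mul_self (by
        simpa only [mul_assoc] using IsReduced.mul_mul_eq_zero_swap hc₂)
    rw [mul_assoc _ s₁] at hc₃
    simpa only [mul_assoc] using IsReduced.mul_mul_eq_zero hc₃ r

theorem IsMinPrime.exists_notMem_mul_eq_zero {P : TwoSidedIdeal R} (hP : IsMinPrime P) {a : R}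
    (ha : a ∈ P) : ∃ s ∉ P, s * a = 0 := by
  by_contra! h
  have h0 : (0 : R) ∉ annSubmonoid hP.1 a := fun ⟨s, hs, hs0⟩ =>
    h s hs (by simpa using hs0 1 (mul_zero 1))
  obtain ⟨Q, hQ, hQM⟩ := exists_isPrimeTSI_disjoint _ h0
  have hQP : Q ≤ P := fun x hxQ => by_contra fun hxP =>
    Set.disjoint_left.mp hQM hxQ ⟨x, hxP, fun c hc => by rw [← mul_assoc, hc, zero_mul]⟩
  exact Set.disjoint_left.mp hQM ((hP.2 Q hQ hQP).symm ▸ ha : a ∈ Q) ⟨1, hP.1.one_notMem, by simp⟩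

theorem exists_isMinPrime_notMem {z : R} (hz : z ≠ 0) : ∃ Q, IsMinPrime Q ∧ z ∉ Q := by
  have h0 : (0 : R) ∉ Submonoid.powers z := fun ⟨n, hn⟩ => hz (IsReduced.eq_zero z ⟨n, hn⟩)
  obtain ⟨Q, hQ, hQz⟩ := exists_isPrimeTSI_disjoint _ h0
  obtain ⟨Q₀, hQ₀, hQ₀Q⟩ := exists_isMinPrime_le hQ
  exact ⟨Q₀, hQ₀, fun hzQ₀ => Set.disjoint_left.mp hQz (hQ₀Q hzQ₀) (Submonoid.mem_powers z)⟩

end MinimalPrimes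

section Pa

variable {R : Type*} [Ring R]

theorem mem_Pa_iff {a x : R} : x ∈ Pa a ↔ ∀ P : TwoSidedIdeal R, IsMinPrime P → a ∈ P → x ∈ P := by
  simp only [Pa, Pmin, Set.mem_iInter, Set.mem_ofPred_eq, SetLike.mem_coe,
    Set.singleton_subset_iff, and_imp]

variable [IsReduced R]

theorem rAnn_lAnn_span_subset_Pa (a : R) : rAnn R (lAnn R (span {a} : Set R)) ⊆ Pa a := by
  refine fun x hx => mem_Pa_iff.mpr fun P hP haP => ?_
  obtain ⟨s, hsP, hsa⟩ := hP.exists_notMem_mul_eq_zero haP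
  have hsx : s * x = 0 := hx s (mem_lAnn_span_singleton.mpr hsa)
  exact (hP.1.mem_or_mem fun r => IsReduced.mul_mul_eq_zero hsx r ▸ P.zero_mem).resolve_left hsP

theorem Pa_subset_rAnn_lAnn_span (a : R) : Pa a ⊆ rAnn R (lAnn R (span {a} : Set R)) := by
  refine fun x hx y hy => by_contra fun hyx => ?_
  obtain ⟨Q, hQ, hyxQ⟩ := exists_isMinPrime_notMem hyx
  have hya : y * a = 0 := mem_lAnn_span_singleton.mp hy
  have haQ : a ∈ Q := (hQ.1.mem_or_mem fun r => IsReduced.mul_mul_eq_zero hya r ▸ Q.zero_mem)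
    |>.resolve_left fun hyQ => hyxQ (Q.mul_mem_right _ _ hyQ)
  exact hyxQ (Q.mul_mem_left _ _ (mem_Pa_iff.mp hx Q hQ haQ))

theorem Pa_eq_rAnn_lAnn_span (a : R) : Pa a = rAnn R (lAnn R (span {a} : Set R)) :=
  (Pa_subset_rAnn_lAnn_span a).antisymm (rAnn_lAnn_span_subset_Pa a)

end Pa

/-- Corollary 3.4(3): in a reduced ring, the principal ideal `RaR` is a right annihilator
ideal iff it is a z°-ideal. -/
theorem stmt3 (R : Type*) [Ring R] (hR : IsReduced R) (a : R) :
    IsRightAnnIdeal (span {a} : TwoSidedIdeal R) ↔ IsZoIdeal (span {a} : TwoSidedIdeal R) := by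
  constructor
  · intro h b hb
    rw [Pa_eq_rAnn_lAnn_span]
    exact (rAnn_anti (lAnn_anti (span_le.mpr (Set.singleton_subset_iff.mpr hb)))).trans
      (Eq.superset h)
  · intro h
    exact (subset_rAnn_lAnn _).antisymm ((Pa_eq_rAnn_lAnn_span a).symm ▸ h a (subset_span rfl))
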